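/- arXiv:2411.06569 — 7 statements merged into one kernel-verified Lean document; each statement's English description precedes it below -/
import Mathlib

section
/- Let x and y be two strings over a finite alphabet with |x| ≠ |y| and |x|, |y| ≤ n (n ≥ 2). Then there exists a deterministic finite automaton with O(log n) states (one may take at most 4.4·log₂ n + 1 states) that distinguishes x and y, in the sense that starting from its initial state it reaches different states after reading x and after reading y. -/
/-!
Let `d = | |y| - |x| |`, so `0 < d ≤ n`. Since `2 ^ k ≤ (k + 1) · lcm(1, …, k)`, the numbers
`1, …, k` cannot all divide `d` once `(k + 1) · d < 2 ^ k`, which happens already for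
`k = 2 log₂ d + 3`. For a non-divisor `m ≤ k` of `d`, the automaton counting the input length
modulo `m` separates `x` from `y`, and it has `m ≤ 2 log₂ n + 3 ≤ 4.4 log₂ n + 1` states.
-/

namespace Nat

theorem exists_not_dvd_of_succ_mul_lt_two_pow {k d : ℕ} (hd : d ≠ 0) (h : (k + 1) * d < 2 ^ k) :
    ∃ m ∈ Finset.Icc 1 k, ¬ m ∣ d := by
  by_contra! hdvd
  have hlcm : lcmUpto k ≤ d := le_of_dvd (pos_of_ne_zero hd) (Finset.lcm_dvd_iff.mpr hdvd)
  have := Chebyshev.two_pow_le_mul_lcmUpto k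
  have := Nat.mul_le_mul_left (k + 1) hlcm
  omega

theorem exists_not_dvd_le_two_mul_log_add_three {d : ℕ} (hd : d ≠ 0) :
    ∃ m, 0 < m ∧ m ≤ 2 * log 2 d + 3 ∧ ¬ m ∣ d := by
  set L := log 2 d
  suffices h : (2 * L + 3 + 1) * d < 2 ^ (2 * L + 3) by
    obtain ⟨m, hm, hmd⟩ := exists_not_dvd_of_succ_mul_lt_two_pow hd h
    rw [Finset.mem_Icc] at hm
    exact ⟨m, hm.1, hm.2, hmd⟩
  have hd_lt : d < 2 ^ (L + 1) := lt_pow_succ_log_self one_lt_two d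
  have hL : L + 2 ≤ 2 ^ (L + 1) := (L + 1).lt_two_pow_self
  calc (2 * L + 3 + 1) * d < (2 * (L + 2)) * 2 ^ (L + 1) := by
        rw [show 2 * L + 3 + 1 = 2 * (L + 2) by ring]
        exact Nat.mul_lt_mul_of_pos_left hd_lt (by omega)
    _ ≤ (2 * 2 ^ (L + 1)) * 2 ^ (L + 1) := by gcongr
    _ = 2 ^ (2 * L + 3) := by ring

end Nat

def lengthModDFA (α : Type*) (m : ℕ) : DFA α (ZMod m) where
  step s _ := s + 1
  start := 0
  accept := ∅ -- arbitrary: distinguishing words only compares the states reached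

theorem lengthModDFA_evalFrom {α : Type*} (m : ℕ) (s : ZMod m) (x : List α) :
    (lengthModDFA α m).evalFrom s x = s + x.length := by
  induction x generalizing s with
  | nil => simp
  | cons a x ih =>
    rw [DFA.evalFrom_cons, ih, List.length_cons, Nat.cast_succ]
    simp only [lengthModDFA]
    ring

theorem lengthModDFA_eval {α : Type*} (m : ℕ) (x : List α) :
    (lengthModDFA α m).eval x = x.length := by
  rw [DFA.eval, lengthModDFA_evalFrom]
  exact zero_add _

theorem lengthModDFA_eval_eq_iff {α : Type*} (m : ℕ) (x y : List α) :
    (lengthModDFA α m).eval x = (lengthModDFA α m).eval y ↔ x.length ≡ y.length [MOD m] := by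
  rw [lengthModDFA_eval, lengthModDFA_eval, ZMod.natCast_eq_natCast_iff]

/-- Two strings of distinct lengths at most `n` can be distinguished by a DFA with
at most `4.4·log₂ n + 1` states: starting from the initial state, it reaches
different states after reading `x` and after reading `y`. -/
theorem stmt3 {α : Type*} (n : ℕ) (x y : List α)
    (hxy : x.length ≠ y.length) (hx : x.length ≤ n) (hy : y.length ≤ n)
    (hn : 2 ≤ n) :
    ∃ (σ : Type) (_ : Fintype σ) (M : DFA α σ),
      (Fintype.card σ : ℝ) ≤ 4.4 * Real.logb 2 n + 1 ∧
      M.eval x ≠ M.eval y := by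
  set d := ((y.length : ℤ) - x.length).natAbs
  obtain ⟨m, hm_pos, hm_le, hm_dvd⟩ := Nat.exists_not_dvd_le_two_mul_log_add_three (d := d)
    (by omega)
  have : NeZero m := ⟨hm_pos.ne'⟩
  refine ⟨ZMod m, inferInstance, lengthModDFA α m, ?_, ?_⟩
  · have hlog_mono : Nat.log 2 d ≤ Nat.log 2 n := Nat.log_mono_right (by omega)
    have hlog_pos : (1 : ℝ) ≤ Nat.log 2 n := by exact_mod_cast Nat.log_pos one_lt_two hn
    have hlog_le : (Nat.log 2 n : ℝ) ≤ Real.logb 2 n := Real.natLog_le_logb n 2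
    have hm : (m : ℝ) ≤ 2 * Nat.log 2 n + 3 := by exact_mod_cast hm_le.trans (by omega)
    rw [ZMod.card]
    linarith
  · rwa [Ne, lengthModDFA_eval_eq_iff, Nat.modEq_iff_dvd, Int.natCast_dvd]
end

section
/- Let f(x₁,…,x_n) be a nonzero polynomial of total degree at most D over a field F, and let S ⊆ F be a finite nonempty subset. If a = (a₁,…,a_n) is chosen uniformly at random from S^n, then the probability that f(a₁,…,a_n) = 0 is at most D/|S|. Equivalently, the number of zeros of f in S^n is at most D·|S|^{n-1}. -/
open MvPolynomial Finset

theorem MvPolynomial.card_zeros_mul_card_le_totalDegree_mul {R : Type*} [CommRing R] [IsDomain R]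
    [DecidableEq R] {n : ℕ} {p : MvPolynomial (Fin n) R} (hp : p ≠ 0) (S : Finset R) :
    #{x ∈ Fintype.piFinset fun _ ↦ S | eval x p = 0} * #S ≤ p.totalDegree * #S ^ n := by
  obtain rfl | hS := S.eq_empty_or_nonempty
  · simp
  have h := schwartz_zippel_totalDegree hp S
  rw [div_le_div_iff₀ (by positivity) (by simpa using hS)] at h
  exact_mod_cast h

/-- DeMillo–Lipton–Schwartz–Zippel: a nonzero `n`-variate polynomial of total
degree at most `D` has at most `D·|S|^{n-1}` zeros in `S^n`; equivalently, a
uniformly random point of `S^n` is a zero with probability at most `D/|S|`. -/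
theorem stmt4 {F : Type*} [Field F] [DecidableEq F] {n : ℕ}
    (f : MvPolynomial (Fin n) F) (hf : f ≠ 0) (D : ℕ)
    (hD : f.totalDegree ≤ D) (S : Finset F) (hS : S.Nonempty) :
    ((Fintype.piFinset fun _ : Fin n => S).filter
        fun a => MvPolynomial.eval a f = 0).card ≤ D * S.card ^ (n - 1) := by
  have hS₀ : 0 < #S := hS.card_pos
  refine le_of_mul_le_mul_right ?_ hS₀
  calc _ ≤ f.totalDegree * #S ^ n := card_zeros_mul_card_le_totalDegree_mul hf S
    _ ≤ D * (#S ^ (n - 1) * #S) := by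
      gcongr
      -- `n - 1` truncates at `n = 0`, where `1 ≤ #S` still gives the bound.
      rw [← pow_succ]
      exact Nat.pow_le_pow_right hS₀ (by omega)
    _ = D * #S ^ (n - 1) * #S := (mul_assoc ..).symm
end

section
/- Let f ∈ F⟨x₁,…,x_n⟩ be a noncommutative polynomial and let A₁,…,A_n be d×d matrices over F⟨z₁,…,z_m⟩ each of which is homogeneous linear in the z-variables, i.e. A_j = Σ_{k=1}^m A_j^{(k)} z_k with A_j^{(k)} ∈ F^{d×d}. Then for any d'×d' matrices B₁,…,B_m over F, substituting C_j := Σ_{k=1}^m A_j^{(k)} ⊗ B_k (of dimension d·d') for x_j in f yields, in the (r,c)-block positions, exactly the evaluation at (B₁,…,B_m) of the noncommutative polynomial appearing in the (r,c) entry of f(A₁,…,A_n). In particular, the ((1,1),(d,d'))-entry of f(C₁,…,C_n) equals the (1,d')-entry of g(B₁,…,B_m), where g is the (1,d)-entry of f(A₁,…,A_n). -/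
/-!
Evaluation at `B` followed by reading a `d × d` matrix of `d' × d'` blocks as one
`dd' × dd'` matrix is an algebra homomorphism `blockEval B` from `d × d` matrices over `F⟨z⟩`
to `dd' × dd'` matrices over `F`; it sends `A_j` to `C_j`, since the entrywise image of
`A_j^{(k)} z_k` is `A_j^{(k)} ⊗ B_k`. Evaluating `f` commutes with algebra
homomorphisms, so `f(C) = blockEval B (f(A))`, which is the claim entry by entry.
-/

/-- Evaluation of a noncommutative polynomial (element of the free algebra
`F⟨x₁,…,x_n⟩`, modelled as the monoid algebra of the free monoid) at elements
`M 0, …, M (n-1)` of an `F`-algebra `R`. -/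
noncomputable def ncEval {F : Type*} [CommSemiring F] {n : ℕ} {R : Type*}
    [Semiring R] [Algebra F R] (M : Fin n → R) :
    MonoidAlgebra F (FreeMonoid (Fin n)) →ₐ[F] R :=
  MonoidAlgebra.lift F R (FreeMonoid (Fin n)) (FreeMonoid.lift M)

open Matrix

section ncEval

variable {F : Type*} [CommSemiring F] {n : ℕ} {R S : Type*} [Semiring R] [Algebra F R]
  [Semiring S] [Algebra F S]

theorem ncEval_of (M : Fin n → R) (j : Fin n) :
    ncEval M (MonoidAlgebra.of F (FreeMonoid (Fin n)) (FreeMonoid.of j)) = M j := by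
  rw [ncEval, MonoidAlgebra.lift_of, FreeMonoid.lift_eval_of]

theorem ncEval_single_of (M : Fin n → R) (j : Fin n) (a : F) :
    ncEval M (MonoidAlgebra.single (FreeMonoid.of j) a) = a • M j := by
  rw [ncEval, MonoidAlgebra.lift_single, FreeMonoid.lift_eval_of]

theorem AlgHom.comp_ncEval (φ : R →ₐ[F] S) (M : Fin n → R) :
    φ.comp (ncEval M) = ncEval (φ ∘ M) := by
  refine MonoidAlgebra.algHom_ext' (FreeMonoid.hom_eq fun j => ?_) (Subsingleton.elim _ _)
  exact (congrArg φ (ncEval_of M j)).trans (ncEval_of (φ ∘ M) j).symm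

end ncEval

section blockEval

variable {F : Type*} [CommSemiring F] {m : ℕ} {ι κ : Type*} [Fintype ι] [DecidableEq ι]
  [Fintype κ] [DecidableEq κ]

noncomputable def blockEval (B : Fin m → Matrix κ κ F) :
    Matrix ι ι (MonoidAlgebra F (FreeMonoid (Fin m))) →ₐ[F] Matrix (ι × κ) (ι × κ) F :=
  (compAlgEquiv ι κ F F).toAlgHom.comp (ncEval B).mapMatrix

theorem blockEval_apply (B : Fin m → Matrix κ κ F)
    (P : Matrix ι ι (MonoidAlgebra F (FreeMonoid (Fin m)))) (i j : ι) (k l : κ) :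
    blockEval B P (i, k) (j, l) = ncEval B (P i j) k l :=
  rfl

theorem blockEval_map_smul_of (B : Fin m → Matrix κ κ F) (M : Matrix ι ι F) (k : Fin m) :
    blockEval B (M.map fun a => a • MonoidAlgebra.of F (FreeMonoid (Fin m)) (FreeMonoid.of k))
      = kroneckerMap (· * ·) M (B k) := by
  ext ⟨i, k₁⟩ ⟨j, k₂⟩
  simp [blockEval_apply, ncEval_single_of]

end blockEval

/-- K = 2 base case of the matrix-composition lemma: if each `A j` is a `d×d`
matrix over `F⟨z₁,…,z_m⟩` that is homogeneous linear in the `z`-variables,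
`A j = Σ_k A_j^{(k)} z_k`, and `B₁,…,B_m` are `d'×d'` matrices over `F`, then
substituting `C j = Σ_k A_j^{(k)} ⊗ B k` for `x_j` in `f` yields in the
`((r,r'),(c,c'))` entry exactly the `(r',c')` entry of the evaluation at `B`
of the noncommutative polynomial in the `(r,c)` entry of `f(A₁,…,A_n)`. -/
theorem stmt5 {F : Type*} [Field F] {n m d d' : ℕ}
    (f : MonoidAlgebra F (FreeMonoid (Fin n)))
    (Aco : Fin n → Fin m → Matrix (Fin d) (Fin d) F)
    (B : Fin m → Matrix (Fin d') (Fin d') F)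
    (A : Fin n → Matrix (Fin d) (Fin d) (MonoidAlgebra F (FreeMonoid (Fin m))))
    (hA : ∀ j, A j = ∑ k, (Aco j k).map
      (fun a => a • MonoidAlgebra.of F (FreeMonoid (Fin m)) (FreeMonoid.of k)))
    (C : Fin n → Matrix (Fin d × Fin d') (Fin d × Fin d') F)
    (hC : ∀ j, C j = ∑ k, Matrix.kroneckerMap (· * ·) (Aco j k) (B k)) :
    ∀ (r c : Fin d) (r' c' : Fin d'),
      ncEval C f (r, r') (c, c') = ncEval B ((ncEval A f) r c) r' c' := by
  intro r c r' c'
  have hCA : C = blockEval B ∘ A := funext fun j => by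
    simp only [Function.comp_apply, hA j, hC j, map_sum, blockEval_map_smul_of]
  rw [hCA, ← AlgHom.comp_ncEval]
  exact blockEval_apply B (ncEval A f) r c r' c'
end

section
/- Let f ∈ F⟨x₁,…,x_n⟩ be a noncommutative polynomial, K ∈ ℕ, and for 2 ≤ i ≤ K+1 let Z_i = {z_{i1},…,z_{i n_i}} be noncommuting variable sets. Suppose for each 1 ≤ i ≤ K we have d_i × d_i matrices A_{i1},…,A_{i n_i} whose entries are homogeneous linear forms in Z_{i+1}: A_{ij} = Σ_k A_{ij}^{(k)} z_{i+1,k} with A_{ij}^{(k)} ∈ F^{d_i×d_i}. Define f₀ = f (with n₁ = n) and f_i as the (1, d_i)-entry of f_{i-1}(A_{i1},…,A_{i n_i}). Then there exist matrices C₁,…,C_n of dimension ∏_{i∈[K]} d_i over F⟨Z_{K+1}⟩ such that f_K equals the (1, ∏_{i∈[K]} d_i)-entry of f(C₁,…,C_n). -/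
/-- The sequence `f₀ = f`, `f_{i+1} = (1, d_{i+1})-entry of f_i(A_{i+1,1},…)`:
each substitution layer `A i` consists of `(dd i + 1)×(dd i + 1)` matrices over
the noncommutative polynomial ring in the next layer's variables. -/
noncomputable def fseq {F : Type*} [Field F] (nv dd : ℕ → ℕ)
    (A : (i : ℕ) → Fin (nv i) → Matrix (Fin (dd i + 1)) (Fin (dd i + 1))
        (MonoidAlgebra F (FreeMonoid (Fin (nv (i + 1))))))
    (f : MonoidAlgebra F (FreeMonoid (Fin (nv 0)))) :
    (i : ℕ) → MonoidAlgebra F (FreeMonoid (Fin (nv i)))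
  | 0 => f
  | (i + 1) => (ncEval (A i) (fseq nv dd A f i)) 0 (Fin.last (dd i))

/-!
Evaluation at matrices is an algebra homomorphism, and so is the map that replaces each entry
of an `m × m` matrix by its image under an algebra homomorphism into `d × d` matrices and reads
the result as an `md × md` block matrix. Composing `K` such maps yields an algebra homomorphism
`Θ : F⟨X⟩ → M_{∏ dᵢ}(F⟨Z_{K+1}⟩)`. The `(1, md)`-entry of a flattened block matrix is the
`(1, d)`-entry of its `(1, m)`-block, so by induction the corner entry of `Θ f` is `f_K`.
Finally every algebra homomorphism out of `F⟨X⟩` is evaluation at the images of the variables,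
so `Cⱼ := Θ xⱼ` works.
-/

open Matrix

lemma ncEval_algHom_of {F : Type*} [CommSemiring F] {n : ℕ} {R : Type*} [Semiring R]
    [Algebra F R] (φ : MonoidAlgebra F (FreeMonoid (Fin n)) →ₐ[F] R) :
    ncEval (fun j => φ (MonoidAlgebra.of F _ (FreeMonoid.of j))) = φ := by
  conv_rhs => rw [MonoidAlgebra.lift_unique' φ]
  exact congrArg (MonoidAlgebra.lift F R _) (FreeMonoid.hom_eq fun _ => rfl)

section corner

variable {R : Type*}

def cornerEntry {n : ℕ} (M : Matrix (Fin n) (Fin n) R) (h : 0 < n) : R :=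
  M ⟨0, h⟩ ⟨n - 1, Nat.sub_lt h Nat.one_pos⟩

lemma cornerEntry_reindex_finCongr {m n : ℕ} (e : m = n) (M : Matrix (Fin m) (Fin m) R)
    (h : 0 < n) : cornerEntry (reindex (finCongr e) (finCongr e) M) h = cornerEntry M (e ▸ h) := by
  subst e
  rfl

variable {F : Type*} [CommSemiring F] {S : Type*} [Semiring R] [Algebra F R] [Semiring S] [Algebra F S]

def blockSubst {m d : ℕ} (φ : R →ₐ[F] Matrix (Fin d) (Fin d) S) :
    Matrix (Fin m) (Fin m) R →ₐ[F] Matrix (Fin (m * d)) (Fin (m * d)) S :=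
  (reindexAlgEquiv F S finProdFinEquiv).toAlgHom.comp
    ((compAlgEquiv (Fin m) (Fin d) S F).toAlgHom.comp φ.mapMatrix)

lemma blockSubst_apply {m d : ℕ} (φ : R →ₐ[F] Matrix (Fin d) (Fin d) S)
    (M : Matrix (Fin m) (Fin m) R) (i j : Fin m) (k l : Fin d) :
    blockSubst φ M (finProdFinEquiv (i, k)) (finProdFinEquiv (j, l)) = φ (M i j) k l := by
  simp [blockSubst]

lemma cornerEntry_blockSubst {m d : ℕ} (φ : R →ₐ[F] Matrix (Fin (d + 1)) (Fin (d + 1)) S)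
    (M : Matrix (Fin m) (Fin m) R) (hm : 0 < m) (h : 0 < m * (d + 1)) :
    cornerEntry (blockSubst φ M) h = φ (cornerEntry M hm) 0 (Fin.last d) := by
  have h0 : (⟨0, h⟩ : Fin (m * (d + 1))) = finProdFinEquiv (⟨0, hm⟩, 0) := by
    ext
    simp
  have hlast : (⟨m * (d + 1) - 1, Nat.sub_lt h Nat.one_pos⟩ : Fin (m * (d + 1))) =
      finProdFinEquiv (⟨m - 1, Nat.sub_lt hm Nat.one_pos⟩, Fin.last d) := by
    obtain ⟨q, rfl⟩ := Nat.exists_eq_add_of_lt hm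
    ext
    simp only [finProdFinEquiv_apply_val, Fin.val_last]
    grind
  rw [cornerEntry, h0, hlast, blockSubst_apply]
  rfl

end corner

theorem exists_algHom_cornerEntry_eq_fseq {F : Type*} [Field F] (nv dd : ℕ → ℕ)
    (A : (i : ℕ) → Fin (nv i) → Matrix (Fin (dd i + 1)) (Fin (dd i + 1))
        (MonoidAlgebra F (FreeMonoid (Fin (nv (i + 1))))))
    (f : MonoidAlgebra F (FreeMonoid (Fin (nv 0)))) (K : ℕ) :
    ∃ Θ : MonoidAlgebra F (FreeMonoid (Fin (nv 0))) →ₐ[F]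
        Matrix (Fin (∏ i ∈ Finset.range K, (dd i + 1))) (Fin (∏ i ∈ Finset.range K, (dd i + 1)))
          (MonoidAlgebra F (FreeMonoid (Fin (nv K)))),
      ∀ h, cornerEntry (Θ f) h = fseq nv dd A f K := by
  induction K with
  | zero =>
    refine ⟨(diagonalAlgHom F).comp (Pi.constAlgHom F _ _), fun h => ?_⟩
    have h0 : (⟨0, h⟩ : Fin _) = ⟨_ - 1, Nat.sub_lt h Nat.one_pos⟩ := Fin.ext (by simp)
    rw [cornerEntry, ← h0]
    exact diagonal_apply_eq (fun _ => f) (⟨0, h⟩ : Fin (∏ i ∈ Finset.range 0, (dd i + 1)))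
  | succ K ih =>
    obtain ⟨Θ, hΘ⟩ := ih
    have hP : 0 < ∏ i ∈ Finset.range K, (dd i + 1) := Finset.prod_pos fun i _ => Nat.succ_pos _
    have hN := (Finset.prod_range_succ (fun i => dd i + 1) K).symm
    refine ⟨(reindexAlgEquiv F _ (finCongr hN)).toAlgHom.comp
      ((blockSubst (ncEval (A K))).comp Θ), fun h => ?_⟩
    change cornerEntry (reindex (finCongr hN) (finCongr hN)
      (blockSubst (ncEval (A K)) (Θ f))) h = _
    rw [cornerEntry_reindex_finCongr, cornerEntry_blockSubst _ _ hP, hΘ]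
    rfl

theorem stmt6_general {F : Type*} [Field F] (K : ℕ) (nv dd : ℕ → ℕ)
    (A : (i : ℕ) → Fin (nv i) → Matrix (Fin (dd i + 1)) (Fin (dd i + 1))
        (MonoidAlgebra F (FreeMonoid (Fin (nv (i + 1))))))
    (f : MonoidAlgebra F (FreeMonoid (Fin (nv 0)))) :
    ∃ C : Fin (nv 0) → Matrix (Fin (∏ i ∈ Finset.range K, (dd i + 1)))
        (Fin (∏ i ∈ Finset.range K, (dd i + 1)))
        (MonoidAlgebra F (FreeMonoid (Fin (nv K)))),
      ∀ h : 0 < ∏ i ∈ Finset.range K, (dd i + 1),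
        ncEval C f ⟨0, h⟩
          ⟨(∏ i ∈ Finset.range K, (dd i + 1)) - 1, Nat.sub_lt h Nat.one_pos⟩ =
          fseq nv dd A f K := by
  obtain ⟨Θ, hΘ⟩ := exists_algHom_cornerEntry_eq_fseq nv dd A f K
  refine ⟨fun j => Θ (MonoidAlgebra.of F _ (FreeMonoid.of j)), fun h => ?_⟩
  rw [ncEval_algHom_of]
  exact hΘ h

/-- Composing `K` substitution matrices: if every layer matrix `A i j` is
homogeneous linear in the next layer's variables (`A_{ij} = Σ_k A_{ij}^{(k)} z_{i+1,k}`),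
then there is a single matrix substitution `C` of dimension `∏_{i<K} d_i`
over the last variable set such that `f_K` is the `(1, ∏ d_i)`-entry of `f(C)`. -/
theorem stmt6 {F : Type*} [Field F] (K : ℕ) (nv dd : ℕ → ℕ)
    (Aco : (i : ℕ) → Fin (nv i) → Fin (nv (i + 1)) →
      Matrix (Fin (dd i + 1)) (Fin (dd i + 1)) F)
    (A : (i : ℕ) → Fin (nv i) → Matrix (Fin (dd i + 1)) (Fin (dd i + 1))
        (MonoidAlgebra F (FreeMonoid (Fin (nv (i + 1))))))
    (hA : ∀ i j, A i j = ∑ k, (Aco i j k).map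
      (fun a => a • MonoidAlgebra.of F (FreeMonoid (Fin (nv (i + 1)))) (FreeMonoid.of k)))
    (f : MonoidAlgebra F (FreeMonoid (Fin (nv 0)))) :
    ∃ C : Fin (nv 0) → Matrix (Fin (∏ i ∈ Finset.range K, (dd i + 1)))
        (Fin (∏ i ∈ Finset.range K, (dd i + 1)))
        (MonoidAlgebra F (FreeMonoid (Fin (nv K)))),
      ∀ h : 0 < ∏ i ∈ Finset.range K, (dd i + 1),
        ncEval C f ⟨0, h⟩
          ⟨(∏ i ∈ Finset.range K, (dd i + 1)) - 1, Nat.sub_lt h Nat.one_pos⟩ =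
          fseq nv dd A f K :=
  stmt6_general K nv dd A f
end

section
/- Let f = Σ_{i=1}^s Q_{i1}·P_i ∈ F⟨X⟩ be nonzero, where each P_i ∈ F⟨X⟩ is homogeneous of degree D−D₁ and each Q_{i1} is homogeneous of degree D₁. Then there exists a monomial m ∈ X^{D−D₁} such that the 'right derivative' f^(m) := Σ_{i=1}^s ([m]P_i)·Q_{i1} is a nonzero polynomial, where [m]P_i ∈ F denotes the coefficient of m in P_i. -/
/-!
Pick a word `u` with `[u]f ≠ 0`. It occurs in some `Q_i * P_i`, so `u = a * m` with `|a| = D₁`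
and `|m| = D − D₁`. Since every `Q_j` is homogeneous of degree `D₁`, the only way to write `a * m`
as a product of a word of `Q_j` and another word is `a · m`, so `[a * m](Q_j P_j) = [a]Q_j · [m]P_j`.
Summing over `j`, the coefficient of `a` in `f^(m)` is `[u]f ≠ 0`.
-/

namespace FreeMonoid

theorem eq_and_eq_of_mul_eq_mul_of_length_eq {α : Type*} {x y a b : FreeMonoid α}
    (h : x * y = a * b) (hlen : x.length = a.length) : x = a ∧ y = b := by
  have hl : x.toList ++ y.toList = a.toList ++ b.toList := by
    simpa only [toList_mul] using congrArg toList h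
  obtain ⟨hxa, hyb⟩ := List.append_inj hl hlen
  exact ⟨toList.injective hxa, toList.injective hyb⟩

end FreeMonoid

section

open MonoidAlgebra

variable {R α : Type*}

theorem uniqueMul_of_forall_length_eq {A B : Finset (FreeMonoid α)} {k : ℕ}
    (hA : ∀ x ∈ A, x.length = k) {a : FreeMonoid α} (ha : a.length = k) (b : FreeMonoid α) :
    UniqueMul A B a b := fun _ _ hx _ h =>
  FreeMonoid.eq_and_eq_of_mul_eq_mul_of_length_eq h ((hA _ hx).trans ha.symm)

theorem coeff_mul_mul_of_forall_length_eq [Semiring R] {Q P : MonoidAlgebra R (FreeMonoid α)}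
    {k : ℕ} (hQ : ∀ w ∈ Q.coeff.support, w.length = k) {a : FreeMonoid α} (ha : a.length = k)
    (b : FreeMonoid α) : (Q * P).coeff (a * b) = Q.coeff a * P.coeff b :=
  coeff_mul_mul_of_uniqueMul (uniqueMul_of_forall_length_eq hQ ha b)

theorem coeff_sum_coeff_smul_eq_coeff_sum_mul [CommSemiring R] {ι : Type*} (t : Finset ι)
    {Q P : ι → MonoidAlgebra R (FreeMonoid α)} {k : ℕ}
    (hQ : ∀ i, ∀ w ∈ (Q i).coeff.support, w.length = k) {a : FreeMonoid α} (ha : a.length = k)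
    (m : FreeMonoid α) :
    (∑ i ∈ t, (P i).coeff m • Q i).coeff a = (∑ i ∈ t, Q i * P i).coeff (a * m) := by
  simp only [coeff_sum, Finsupp.finsetSum_apply, coeff_smul_apply, smul_eq_mul,
    coeff_mul_mul_of_forall_length_eq (hQ _) ha, mul_comm]

end

/-- Right derivative / nonvanishing prefix extraction: if
`f = Σ_i Q_i · P_i ≠ 0` with each `Q_i` homogeneous of degree `D₁` and each
`P_i` homogeneous of degree `Dm = D − D₁`, then there is a word `m` of length
`Dm` such that `f^(m) = Σ_i ([m]P_i)·Q_i ≠ 0`. -/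
theorem stmt10 {F : Type*} [Field F] {n s D₁ Dm : ℕ}
    (Q P : Fin s → MonoidAlgebra F (FreeMonoid (Fin n)))
    (hQ : ∀ i, ∀ w ∈ (Q i).coeff.support, (FreeMonoid.toList w).length = D₁)
    (hP : ∀ i, ∀ w ∈ (P i).coeff.support, (FreeMonoid.toList w).length = Dm)
    (hne : (∑ i, Q i * P i) ≠ 0) :
    ∃ m : FreeMonoid (Fin n), (FreeMonoid.toList m).length = Dm ∧
      (∑ i, (P i).coeff m • Q i) ≠ 0 := by
  classical
  obtain ⟨u, hu⟩ : ∃ u, (∑ i, Q i * P i).coeff u ≠ 0 :=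
    DFunLike.ne_iff.mp (MonoidAlgebra.coeff_eq_zero.not.mpr hne)
  obtain ⟨i, -, hi⟩ : ∃ i ∈ Finset.univ, (Q i * P i).coeff u ≠ 0 := by
    rw [MonoidAlgebra.coeff_sum, Finsupp.finsetSum_apply] at hu
    exact Finset.exists_ne_zero_of_sum_ne_zero hu
  obtain ⟨a, ha, m, hm, rfl⟩ := Finset.mem_mul.mp
    (MonoidAlgebra.support_coeff_mul_subset (Q i) (P i) (Finsupp.mem_support_iff.mpr hi))
  refine ⟨m, hP i m hm, fun hzero => hu ?_⟩
  rw [← coeff_sum_coeff_smul_eq_coeff_sum_mul _ hQ (hQ i a ha), hzero, MonoidAlgebra.coeff_zero,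
    Finsupp.coe_zero, Pi.zero_apply]
end

section
/- Let f̂ = Σ_{i=1}^s ∏_{j=1}^{D₂} Q̂_{ij}, where each Q̂_{ij} is an s-ordered power-sum polynomial over noncommuting variables ξ₁,…,ξ_s, and suppose f̂ ≠ 0. Then there exists a subset I ⊆ [D₂] with |I| ≤ s−1 such that the polynomial obtained by replacing, in each factor Q̂_{ij} with j ∉ I, every noncommuting variable ξ_k by a commuting variable ζ_k (while keeping the factors with j ∈ I noncommutative) is still nonzero. -/
/-- The inclusion `F⟨ξ⟩ → F[ζ]⟨ξ⟩` keeping the `ξ`-variables noncommutative. -/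
noncomputable def keepNC (F : Type*) [Field F] (s : ℕ) :
    MonoidAlgebra F (FreeMonoid (Fin s)) →ₐ[F]
      MonoidAlgebra (MvPolynomial (Fin s) F) (FreeMonoid (Fin s)) :=
  ncEval fun i =>
    MonoidAlgebra.of (MvPolynomial (Fin s) F) (FreeMonoid (Fin s)) (FreeMonoid.of i)

/-- The abelianization `F⟨ξ⟩ → F[ζ] ⊆ F[ζ]⟨ξ⟩` replacing each noncommuting
variable `ξ_k` by the commuting variable `ζ_k`. -/
noncomputable def makeComm (F : Type*) [Field F] (s : ℕ) :
    MonoidAlgebra F (FreeMonoid (Fin s)) →ₐ[F]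
      MonoidAlgebra (MvPolynomial (Fin s) F) (FreeMonoid (Fin s)) :=
  ncEval fun i => MonoidAlgebra.single 1 (MvPolynomial.X i)

/-! Induct on the factors from the left, proving the claim for every coefficient vector `c` in
place of `(1, …, 1)`, with `#I` smaller than the size of the support of `c`. Let `P i` be the
product of the remaining factors. If the leading factors satisfy `c i • Q i j = μ i • Q i₀ j`,
recurse with `μ` and abelianize `Q i₀ j`: abelianization is injective on `s`-ordered polynomials
and `F[ζ]` is a domain. Otherwise expand in words, `∑ i, c i • Q i j * P i = ∑ w, w * Φ (u w)`
with `u w i = c i * coeff_w (Q i j)` and `Φ v = ∑ i, v i • P i`. The vectors `u w` do not lie on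
a line and `Φ` does not vanish on their span, so the span contains some `v` with `Φ v ≠ 0` and a
zero inside the support of `c`. Recurse with `v` and keep factor `j` noncommutative: all words
`w` have length `D₁`, so the same expansion of the sparsified sum vanishes only if the sparsified
`Φ` kills every `u w`, hence `v`. -/

open Finset

section Abelianization

variable {F : Type*} [CommSemiring F] {s : ℕ}

theorem ncEval_single {R : Type*} [Semiring R] [Algebra F R] (M : Fin s → R)
    (w : FreeMonoid (Fin s)) (c : F) :
    ncEval M (MonoidAlgebra.single w c) = c • FreeMonoid.lift M w := by
  simp [ncEval, MonoidAlgebra.lift_single]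

variable (F s) in
noncomputable def abelianize : MonoidAlgebra F (FreeMonoid (Fin s)) →ₐ[F] MvPolynomial (Fin s) F :=
  ncEval MvPolynomial.X

theorem abelianize_single (w : FreeMonoid (Fin s)) (c : F) :
    abelianize F s (MonoidAlgebra.single w c)
      = MvPolynomial.monomial (Multiset.toFinsupp (w.toList : Multiset (Fin s))) c := by
  have prod_X : ∀ l : List (Fin s), (l.map (MvPolynomial.X (R := F))).prod
      = MvPolynomial.monomial (Multiset.toFinsupp (l : Multiset (Fin s))) 1 := by
    intro l
    induction l with
    | nil => simp
    | cons a l ih =>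
      rw [List.map_cons, List.prod_cons, ih, MvPolynomial.X, MvPolynomial.monomial_mul, one_mul,
        ← Multiset.cons_coe, ← Multiset.singleton_add, map_add, Multiset.toFinsupp_singleton]
  rw [abelianize, ncEval_single, FreeMonoid.lift_apply, prod_X, MvPolynomial.smul_monomial,
    smul_eq_mul, mul_one]

/-- Sorted words are determined by their letter counts, so abelianization is injective on them. -/
theorem abelianize_ne_zero {q : MonoidAlgebra F (FreeMonoid (Fin s))}
    (hq : ∀ w ∈ q.coeff.support, w.toList.Pairwise (· ≤ ·)) (h : q ≠ 0) :
    abelianize F s q ≠ 0 := by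
  obtain ⟨w₀, hw₀⟩ := Finsupp.support_nonempty_iff.mpr (mt MonoidAlgebra.coeff_eq_zero.mp h)
  have hcoeff : (abelianize F s q).coeff (Multiset.toFinsupp (w₀.toList : Multiset (Fin s)))
      = q.coeff w₀ := by
    conv_lhs => rw [← MonoidAlgebra.sum_coeff_single q]
    rw [Finsupp.sum, map_sum, MvPolynomial.coeff_sum, Finset.sum_eq_single w₀]
    · rw [abelianize_single, MvPolynomial.coeff_monomial, if_pos rfl]
    · intro w hw hne
      rw [abelianize_single, MvPolynomial.coeff_monomial, if_neg]
      intro hcount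
      have hperm := Multiset.coe_eq_coe.mp (Multiset.toFinsupp.injective hcount)
      exact hne (FreeMonoid.toList.injective (hperm.eq_of_pairwise' (hq w hw) (hq w₀ hw₀)))
    · exact fun h => absurd hw₀ h
  intro h0
  rw [h0, MvPolynomial.coeff_zero] at hcoeff
  exact Finsupp.mem_support_iff.mp hw₀ hcoeff.symm

end Abelianization

section Specializations

variable {F : Type*} [Field F] {s : ℕ}

theorem keepNC_single_one (w : FreeMonoid (Fin s)) :
    keepNC F s (MonoidAlgebra.single w 1) = MonoidAlgebra.single w 1 := by
  have : FreeMonoid.lift (fun i => MonoidAlgebra.of (MvPolynomial (Fin s) F) _ (FreeMonoid.of i))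
      = MonoidAlgebra.of (MvPolynomial (Fin s) F) (FreeMonoid (Fin s)) :=
    FreeMonoid.hom_eq fun _ => by simp
  rw [keepNC, ncEval_single, this, one_smul, MonoidAlgebra.of_apply]

theorem makeComm_eq_single_abelianize (q : MonoidAlgebra F (FreeMonoid (Fin s))) :
    makeComm F s q = MonoidAlgebra.single 1 (abelianize F s q) := by
  induction q using MonoidAlgebra.induction_linear with
  | zero => simp
  | add f g hf hg => rw [map_add, map_add, hf, hg, MonoidAlgebra.single_add]
  | single w c =>
    have : FreeMonoid.lift (fun i => (MonoidAlgebra.single 1 (MvPolynomial.X i) :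
          MonoidAlgebra (MvPolynomial (Fin s) F) (FreeMonoid (Fin s))))
        = MonoidAlgebra.singleOneRingHom.toMonoidHom.comp (FreeMonoid.lift MvPolynomial.X) :=
      FreeMonoid.hom_eq fun _ => by simp [MonoidAlgebra.singleOneRingHom]
    rw [makeComm, abelianize, ncEval_single, ncEval_single, this]
    exact MonoidAlgebra.smul_single _ _ _

theorem makeComm_mul_ne_zero {q : MonoidAlgebra F (FreeMonoid (Fin s))}
    (hq : ∀ w ∈ q.coeff.support, w.toList.Pairwise (· ≤ ·)) (h : q ≠ 0)
    {x : MonoidAlgebra (MvPolynomial (Fin s) F) (FreeMonoid (Fin s))} (hx : x ≠ 0) :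
    makeComm F s q * x ≠ 0 := by
  obtain ⟨v, hv⟩ := Finsupp.support_nonempty_iff.mpr (mt MonoidAlgebra.coeff_eq_zero.mp hx)
  intro h0
  have := MonoidAlgebra.coeff_single_one_mul x (abelianize F s q) v
  rw [← makeComm_eq_single_abelianize, h0, MonoidAlgebra.coeff_zero, Finsupp.zero_apply] at this
  exact mul_ne_zero (abelianize_ne_zero hq h) (Finsupp.mem_support_iff.mp hv) this.symm

end Specializations

theorem FreeMonoid.eq_of_mul_eq_mul_of_length_eq {α : Type*} {w w' v v' : FreeMonoid α}
    (h : w * v = w' * v') (hlen : w.toList.length = w'.toList.length) : w = w' := by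
  have := congrArg FreeMonoid.toList h
  rw [FreeMonoid.toList_mul, FreeMonoid.toList_mul] at this
  exact FreeMonoid.toList.injective (List.append_inj this hlen).1

theorem MonoidAlgebra.eq_zero_of_sum_single_mul_eq_zero {k α : Type*} [Semiring k] {n : ℕ}
    {W : Finset (FreeMonoid α)} (hW : ∀ w ∈ W, w.toList.length = n)
    (y : FreeMonoid α → MonoidAlgebra k (FreeMonoid α))
    (h : ∑ w ∈ W, MonoidAlgebra.single w 1 * y w = 0) :
    ∀ w ∈ W, y w = 0 := by
  classical
  intro w hw
  ext v
  have hcoeff := congrArg (fun z => MonoidAlgebra.coeff z (w * v)) h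
  simp only [MonoidAlgebra.coeff_sum, Finsupp.finsetSum_apply, MonoidAlgebra.coeff_zero,
    Finsupp.zero_apply] at hcoeff
  rw [Finset.sum_eq_single w, MonoidAlgebra.coeff_single_mul_mul, one_mul] at hcoeff
  · simpa using hcoeff
  · intro w' hw' hne
    refine MonoidAlgebra.coeff_single_mul_of_forall_mul_ne _ _ fun v' heq => hne ?_
    exact FreeMonoid.eq_of_mul_eq_mul_of_length_eq heq (by rw [hW w' hw', hW w hw])
  · exact fun h => absurd hw h

/-- If `Φ` does not vanish on `V` but vanishes on every vector of `V` with a zero inside the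
support of `c`, then the ratio `Φ v / Φ v₀` is read off from every coordinate in that support,
which forces `V` to be a line. -/
theorem Submodule.exists_mem_map_ne_zero_apply_eq_zero {F M ι : Type*} [Field F] [AddCommGroup M]
    [Module F M] {V : Submodule F (ι → F)} {c : ι → F} (hV : ∀ v ∈ V, ∀ i, c i = 0 → v i = 0)
    (Φ : (ι → F) →ₗ[F] M) {v₀ : ι → F} (hv₀ : v₀ ∈ V) (hΦ : Φ v₀ ≠ 0) (hline : ¬ V ≤ F ∙ v₀) :
    ∃ v ∈ V, Φ v ≠ 0 ∧ ∃ i, c i ≠ 0 ∧ v i = 0 := by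
  by_contra! hfull
  have ratio : ∀ v ∈ V, ∀ i, c i ≠ 0 → Φ v = (v i / v₀ i) • Φ v₀ := by
    intro v hv i hi
    have hv₀i : v₀ i ≠ 0 := hfull v₀ hv₀ hΦ i hi
    by_contra hne
    refine hfull (v - (v i / v₀ i) • v₀) (V.sub_mem hv (V.smul_mem _ hv₀)) ?_ i hi ?_
    · rwa [map_sub, map_smul, sub_ne_zero]
    · simp [div_mul_cancel₀ _ hv₀i]
  obtain ⟨i₀, hi₀⟩ := Function.ne_iff.mp (show v₀ ≠ 0 from fun h0 => hΦ (by rw [h0, map_zero]))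
  have hci₀ : c i₀ ≠ 0 := fun h0 => hi₀ (hV v₀ hv₀ i₀ h0)
  refine hline fun v hv => Submodule.mem_span_singleton.mpr ⟨v i₀ / v₀ i₀, funext fun i => ?_⟩
  by_cases hci : c i = 0
  · simp [hV v hv i hci, hV v₀ hv₀ i hci]
  have hv₀i : v₀ i ≠ 0 := hfull v₀ hv₀ hΦ i hci
  have hsame : v i₀ / v₀ i₀ = v i / v₀ i :=
    smul_left_injective F hΦ ((ratio v hv i₀ hci₀).symm.trans (ratio v hv i hci))
  simp [hsame, div_mul_cancel₀ _ hv₀i]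

section CoefficientVectors

variable {F M ι : Type*}

def coeffVec [CommSemiring F] (c : ι → F) (q : ι → MonoidAlgebra F M) (w : M) : ι → F :=
  fun i => c i * (q i).coeff w

theorem coeffVec_eq_zero_of_notMem [CommSemiring F] {c : ι → F} {q : ι → MonoidAlgebra F M}
    {w : M} (hw : ∀ i, w ∉ (q i).coeff.support) : coeffVec c q w = 0 :=
  funext fun i => by simp [coeffVec, Finsupp.notMem_support_iff.mp (hw i)]

theorem apply_eq_zero_of_mem_span_coeffVec [CommSemiring F] {c : ι → F}
    {q : ι → MonoidAlgebra F M} {v : ι → F} (hv : v ∈ Submodule.span F (Set.range (coeffVec c q)))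
    {i : ι} (hci : c i = 0) : v i = 0 :=
  (Submodule.span_le (p := LinearMap.ker (LinearMap.proj i)) |>.mpr
    (by rintro _ ⟨w, rfl⟩; simp [coeffVec, hci])) hv

theorem sum_smul_mul_eq_mul_sum_smul [CommSemiring F] {R : Type*} [Semiring R] [Algebra F R]
    [Fintype ι] {c μ : ι → F} {x : ι → R} {y : R} (h : ∀ i, c i • x i = μ i • y) (T : ι → R) :
    ∑ i, c i • (x i * T i) = y * ∑ i, μ i • T i := by
  rw [Finset.mul_sum]
  refine Finset.sum_congr rfl fun i _ => ?_
  rw [← smul_mul_assoc, h, smul_mul_assoc, mul_smul_comm]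

theorem sum_smul_map_mul_eq_sum_single_mul [CommSemiring F] [Monoid M] {R : Type*} [Semiring R]
    [Algebra F R] [Fintype ι] (κ : MonoidAlgebra F M →ₐ[F] R) (q : ι → MonoidAlgebra F M)
    {W : Finset M} (hW : ∀ i, (q i).coeff.support ⊆ W) (c : ι → F) (T : ι → R) :
    ∑ i, c i • (κ (q i) * T i)
      = ∑ w ∈ W, κ (MonoidAlgebra.single w 1) * Fintype.linearCombination F T (coeffVec c q w) := by
  have expand : ∀ i, κ (q i) = ∑ w ∈ W, (q i).coeff w • κ (MonoidAlgebra.single w 1) := by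
    intro i
    conv_lhs => rw [← MonoidAlgebra.sum_coeff_single (q i),
      Finsupp.sum_of_support_subset _ (hW i) _ fun _ _ => MonoidAlgebra.single_zero _]
    simp_rw [map_sum, ← map_smul, MonoidAlgebra.smul_single, smul_eq_mul, mul_one]
  simp_rw [expand, Fintype.linearCombination_apply, coeffVec, Finset.sum_mul, Finset.smul_sum,
    Finset.mul_sum]
  rw [Finset.sum_comm]
  refine Finset.sum_congr rfl fun w _ => Finset.sum_congr rfl fun i _ => ?_
  rw [smul_mul_assoc, smul_smul, mul_smul_comm]

theorem exists_smul_eq_smul_of_coeffVec_mem_span_singleton [Field F] (q : ι → MonoidAlgebra F M)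
    {c v₀ : ι → F} (hv₀ : v₀ ≠ 0) (h : ∀ w, coeffVec c q w ∈ F ∙ v₀) :
    ∃ (i₀ : ι) (μ : ι → F), ∀ i, c i • q i = μ i • q i₀ := by
  obtain ⟨i₀, hi₀⟩ : ∃ i, v₀ i ≠ 0 := Function.ne_iff.mp hv₀
  refine ⟨i₀, fun i => v₀ i * c i₀ / v₀ i₀, fun i => ?_⟩
  ext w
  obtain ⟨a, ha⟩ := Submodule.mem_span_singleton.mp (h w)
  have hi := congrFun ha i
  have hi₀' := congrFun ha i₀
  simp only [coeffVec, Pi.smul_apply, smul_eq_mul] at hi hi₀'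
  simp only [MonoidAlgebra.coeff_smul, Finsupp.smul_apply, smul_eq_mul]
  rw [← hi, mul_div_right_comm, mul_assoc, ← hi₀']
  field_simp

end CoefficientVectors

section Sparsification

variable {F : Type*} [Field F] {s : ℕ} {ι κ : Type*} [Fintype ι]

theorem span_coeffVec_le_ker_of_sum_keepNC_mul_eq_zero {D₁ : ℕ}
    {q : ι → MonoidAlgebra F (FreeMonoid (Fin s))}
    (hlen : ∀ i, ∀ w ∈ (q i).coeff.support, w.toList.length = D₁) {c : ι → F}
    {T : ι → MonoidAlgebra (MvPolynomial (Fin s) F) (FreeMonoid (Fin s))}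
    (h : ∑ i, c i • (keepNC F s (q i) * T i) = 0) :
    Submodule.span F (Set.range (coeffVec c q)) ≤ LinearMap.ker (Fintype.linearCombination F T) := by
  classical
  set W := univ.biUnion fun i => (q i).coeff.support
  have hW : ∀ i, (q i).coeff.support ⊆ W := fun i =>
    subset_biUnion_of_mem (fun i => (q i).coeff.support) (mem_univ i)
  have hWlen : ∀ w ∈ W, w.toList.length = D₁ := fun w hw => by
    obtain ⟨i, -, hi⟩ := mem_biUnion.mp hw
    exact hlen i w hi
  simp only [sum_smul_map_mul_eq_sum_single_mul (keepNC F s) q hW, keepNC_single_one] at h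
  refine Submodule.span_le.mpr ?_
  rintro _ ⟨w, rfl⟩
  by_cases hw : w ∈ W
  · exact MonoidAlgebra.eq_zero_of_sum_single_mul_eq_zero hWlen _ h w hw
  · rw [coeffVec_eq_zero_of_notMem fun i hi => hw (hW i hi)]
    exact zero_mem _

variable [DecidableEq κ]

noncomputable def sparseProd (I : Finset κ) (q : κ → MonoidAlgebra F (FreeMonoid (Fin s)))
    (l : List κ) : MonoidAlgebra (MvPolynomial (Fin s) F) (FreeMonoid (Fin s)) :=
  (l.map fun j => if j ∈ I then keepNC F s (q j) else makeComm F s (q j)).prod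

theorem sparseProd_nil (I : Finset κ) (q : κ → MonoidAlgebra F (FreeMonoid (Fin s))) :
    sparseProd I q [] = 1 :=
  List.prod_nil

theorem sparseProd_cons (I : Finset κ) (q : κ → MonoidAlgebra F (FreeMonoid (Fin s)))
    (j : κ) (l : List κ) :
    sparseProd I q (j :: l)
      = (if j ∈ I then keepNC F s (q j) else makeComm F s (q j)) * sparseProd I q l :=
  List.prod_cons

theorem sparseProd_insert_of_notMem {j : κ} {l : List κ} (hj : j ∉ l) (I : Finset κ)
    (q : κ → MonoidAlgebra F (FreeMonoid (Fin s))) :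
    sparseProd (insert j I) q l = sparseProd I q l := by
  unfold sparseProd
  congr 1
  refine List.map_congr_left fun j' hj' => ?_
  simp only [Finset.mem_insert, ne_of_mem_of_not_mem hj' hj, false_or]

def HasSparsification (Q : ι → κ → MonoidAlgebra F (FreeMonoid (Fin s))) (l : List κ)
    (c : ι → F) : Prop :=
  ∃ I : Finset κ, (∀ j ∈ I, j ∈ l) ∧ #I < (Function.support c).ncard ∧
    ∑ i, c i • sparseProd I (Q i) l ≠ 0

def Sparsifiable (Q : ι → κ → MonoidAlgebra F (FreeMonoid (Fin s))) (l : List κ) : Prop :=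
  ∀ c : ι → F, ∑ i, c i • (l.map (Q i)).prod ≠ 0 → HasSparsification Q l c

theorem sparsifiable_nil (Q : ι → κ → MonoidAlgebra F (FreeMonoid (Fin s))) :
    Sparsifiable Q [] := by
  intro c hc
  simp only [List.map_nil, List.prod_nil, ← Finset.sum_smul] at hc
  refine ⟨∅, by simp, ?_, ?_⟩
  · obtain ⟨i, -, hi⟩ := Finset.exists_ne_zero_of_sum_ne_zero (left_ne_zero_of_smul hc)
    exact (Set.ncard_pos (Set.toFinite _)).mpr ⟨i, hi⟩
  · simp only [sparseProd_nil, ← Finset.sum_smul]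
    exact smul_ne_zero (left_ne_zero_of_smul hc) one_ne_zero

variable {Q : ι → κ → MonoidAlgebra F (FreeMonoid (Fin s))} {j : κ} {l : List κ}

theorem Sparsifiable.hasSparsification_cons_of_smul_eq_smul (ih : Sparsifiable Q l)
    (hj : j ∉ l) (hsorted : ∀ i, ∀ w ∈ (Q i j).coeff.support, w.toList.Pairwise (· ≤ ·))
    {c : ι → F} (hc : ∑ i, c i • ((j :: l).map (Q i)).prod ≠ 0)
    {i₀ : ι} {μ : ι → F} (hμ : ∀ i, c i • Q i j = μ i • Q i₀ j) :
    HasSparsification Q (j :: l) c := by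
  simp only [List.map_cons, List.prod_cons] at hc
  rw [sum_smul_mul_eq_mul_sum_smul hμ] at hc
  have hQ₀ : Q i₀ j ≠ 0 := left_ne_zero_of_mul hc
  obtain ⟨I, hIl, hIcard, hI⟩ := ih μ (right_ne_zero_of_mul hc)
  have hsupp : Function.support μ ⊆ Function.support c := fun i hμi hci =>
    hμi ((smul_eq_zero.mp (by rw [← hμ i, hci, zero_smul])).resolve_right hQ₀)
  have hjI : j ∉ I := fun h => hj (hIl j h)
  refine ⟨I, fun j' h => List.mem_cons_of_mem j (hIl j' h),
    hIcard.trans_le (Set.ncard_le_ncard hsupp (Set.toFinite _)), ?_⟩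
  simp only [sparseProd_cons, if_neg hjI]
  rw [sum_smul_mul_eq_mul_sum_smul fun i => by rw [← map_smul, hμ i, map_smul]]
  exact makeComm_mul_ne_zero (hsorted i₀) hQ₀ hI

theorem Sparsifiable.hasSparsification_cons_of_not_smul_eq_smul {D₁ : ℕ} (ih : Sparsifiable Q l)
    (hj : j ∉ l) (hlen : ∀ i, ∀ w ∈ (Q i j).coeff.support, w.toList.length = D₁)
    {c : ι → F} (hc : ∑ i, c i • ((j :: l).map (Q i)).prod ≠ 0)
    (hμ : ¬ ∃ (i₀ : ι) (μ : ι → F), ∀ i, c i • Q i j = μ i • Q i₀ j) :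
    HasSparsification Q (j :: l) c := by
  classical
  set u := coeffVec c fun i => Q i j
  set V := Submodule.span F (Set.range u)
  set Φ := Fintype.linearCombination F fun i => (l.map (Q i)).prod
  simp only [List.map_cons, List.prod_cons] at hc
  have hexpand := sum_smul_map_mul_eq_sum_single_mul (AlgHom.id F _) (fun i => Q i j)
    (fun i => subset_biUnion_of_mem (fun i => (Q i j).coeff.support) (mem_univ i)) c
    fun i => (l.map (Q i)).prod
  simp only [AlgHom.id_apply] at hexpand
  rw [hexpand] at hc
  obtain ⟨w₀, -, hw₀⟩ := exists_ne_zero_of_sum_ne_zero hc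
  have hΦ₀ : Φ (u w₀) ≠ 0 := right_ne_zero_of_mul hw₀
  have hline : ¬ V ≤ F ∙ u w₀ := fun hle =>
    hμ (exists_smul_eq_smul_of_coeffVec_mem_span_singleton _
      (fun h0 => hΦ₀ (by rw [h0, map_zero])) fun w => hle (Submodule.subset_span ⟨w, rfl⟩))
  obtain ⟨v, hvV, hΦv, i₁, hci₁, hvi₁⟩ := Submodule.exists_mem_map_ne_zero_apply_eq_zero
    (fun v hv i => apply_eq_zero_of_mem_span_coeffVec hv) Φ (Submodule.subset_span ⟨w₀, rfl⟩)
    hΦ₀ hline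
  obtain ⟨I, hIl, hIcard, hI⟩ := ih v (by rwa [Fintype.linearCombination_apply] at hΦv)
  have hsupp : Function.support v ⊂ Function.support c :=
    ⟨fun i hvi hci => hvi (apply_eq_zero_of_mem_span_coeffVec hvV hci), fun h => h hci₁ hvi₁⟩
  refine ⟨insert j I, fun j' h => List.mem_cons.mpr ((mem_insert.mp h).imp_right (hIl j')), ?_, ?_⟩
  · have := Set.ncard_lt_ncard hsupp (Set.toFinite _)
    have := card_insert_le j I
    omega
  simp only [sparseProd_cons, if_pos (mem_insert_self j I), sparseProd_insert_of_notMem hj]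
  intro h0
  have hker := span_coeffVec_le_ker_of_sum_keepNC_mul_eq_zero hlen h0 hvV
  rw [LinearMap.mem_ker, Fintype.linearCombination_apply] at hker
  exact hI hker

end Sparsification

theorem sparsifiable_of_nodup {F : Type*} [Field F] {s D₁ : ℕ} {ι κ : Type*} [Fintype ι]
    [DecidableEq κ] (Q : ι → κ → MonoidAlgebra F (FreeMonoid (Fin s)))
    (hQ : ∀ i j, ∀ w ∈ (Q i j).coeff.support,
      w.toList.Pairwise (· ≤ ·) ∧ w.toList.length = D₁)
    {l : List κ} (hl : l.Nodup) : Sparsifiable Q l := by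
  induction l with
  | nil => exact sparsifiable_nil Q
  | cons j l ih =>
    obtain ⟨hj, hl⟩ := List.nodup_cons.mp hl
    intro c hc
    by_cases hμ : ∃ (i₀ : ι) (μ : ι → F), ∀ i, c i • Q i j = μ i • Q i₀ j
    · obtain ⟨i₀, μ, hμ⟩ := hμ
      exact (ih hl).hasSparsification_cons_of_smul_eq_smul hj (fun i w hw => (hQ i j w hw).1) hc hμ
    · exact (ih hl).hasSparsification_cons_of_not_smul_eq_smul hj (fun i w hw => (hQ i j w hw).2)
        hc hμ

/-- Product Sparsification Lemma: if `f̂ = Σ_{i∈[s]} ∏_{j∈[D₂]} Q̂_{ij} ≠ 0`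
where each `Q̂_{ij}` is an `s`-ordered power-sum polynomial (homogeneous of
degree `D₁`), then there is `I ⊆ [D₂]` with `|I| ≤ s−1` such that keeping the
factors with `j ∈ I` noncommutative and replacing each `ξ_k` by the commuting
`ζ_k` in the remaining factors still yields a nonzero polynomial. -/
theorem stmt13 {F : Type*} [Field F] {s D₁ D₂ : ℕ}
    (Q : Fin s → Fin D₂ → MonoidAlgebra F (FreeMonoid (Fin s)))
    (hord : ∀ i j, ∀ w ∈ (Q i j).coeff.support,
      (FreeMonoid.toList w).Pairwise (· ≤ ·) ∧ (FreeMonoid.toList w).length = D₁)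
    (hne : (∑ i, (List.ofFn fun j => Q i j).prod) ≠ 0) :
    ∃ I : Finset (Fin D₂), I.card ≤ s - 1 ∧
      (∑ i, (List.ofFn fun j =>
        if j ∈ I then keepNC F s (Q i j) else makeComm F s (Q i j)).prod) ≠ 0 := by
  obtain ⟨I, -, hIcard, hI⟩ := sparsifiable_of_nodup Q hord (List.nodup_finRange D₂) (fun _ => 1)
    (by simpa [List.ofFn_eq_map] using hne)
  have hs : (Function.support fun _ : Fin s => (1 : F)).ncard = s := by
    rw [Function.support_const one_ne_zero, Set.ncard_univ, Nat.card_fin]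
  exact ⟨I, by omega, by simpa [sparseProd, List.ofFn_eq_map] using hI⟩
end

section
/- Let f = Σ_{i=1}^s ∏_{j=1}^{D₂} Q_{ij} be a nonzero homogeneous noncommutative polynomial in F⟨X⟩, where each Q_{ij} is homogeneous of degree D₁ and suppose each Q_{ij} can be transformed, by a fixed F-linear injective-on-monomials substitution τ (the same τ for all i,j, replacing each Q_{ij} by a nonzero polynomial Q̂_{ij} over new variables such that Q_{ij} ≠ 0 implies Q̂_{ij} ≠ 0 and linear relations Σ_i c_i Q_{i,j} = 0 hold iff Σ_i c_i Q̂_{i,j} = 0). Then f̂ := Σ_{i=1}^s ∏_{j=1}^{D₂} Q̂_{ij} is nonzero. -/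
/-!
A polynomial all of whose monomials have length `D₁` is linear in the block letters, the words
of length `D₁`. Lifting every `Q i j` to the block alphabet, `f` and `f̂` become the images of a
single polynomial `P` under the monoid homomorphisms sending a block `w` to `w` and to `σ w`
respectively. As `σ` is injective and all `σ w` have the same length `D'`, the second one is
injective on block words of any fixed length, in particular on the support of `P`, which consists
of block words of length `D₂`. Hence `f̂ = 0` forces `P = 0`, and then `f = 0`.
-/

open Function

namespace FreeMonoid

variable {α β γ M : Type*}

theorem lift_inj_of_length_eq {g : γ → FreeMonoid β} (hg : Injective g) {d : ℕ}
    (hd : ∀ c, (g c).length = d) {u v : FreeMonoid γ} (huv : u.length = v.length)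
    (h : lift g u = lift g v) : u = v := by
  induction u using FreeMonoid.inductionOn' generalizing v with
  | one => exact (length_eq_zero.1 huv.symm).symm
  | of_mul a u ih =>
    cases v using FreeMonoid.casesOn with
    | one => simp at huv
    | of_mul b v =>
      simp only [map_mul, lift_eval_of] at h
      obtain ⟨hab, huv'⟩ := List.append_inj (congrArg toList h) ((hd a).trans (hd b).symm)
      rw [hg (toList.injective hab), ih (by simpa using huv) (toList.injective huv')]

theorem lift_injOn_length {g : γ → FreeMonoid β} (hg : Injective g) {d : ℕ}
    (hd : ∀ c, (g c).length = d) (k : ℕ) : Set.InjOn (lift g) {u | u.length = k} :=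
  fun _ hu _ hv => lift_inj_of_length_eq hg hd (hu.trans hv.symm)

abbrev Block (α : Type*) (d : ℕ) := {w : FreeMonoid α // w.length = d}

-- Words of length other than `d` are sent to the junk value `1`.
def toBlock (d : ℕ) (w : FreeMonoid α) : FreeMonoid (Block α d) :=
  if h : w.length = d then of ⟨w, h⟩ else 1

theorem length_toBlock {d : ℕ} {w : FreeMonoid α} (hw : w.length = d) :
    (toBlock d w).length = 1 := by
  simp [toBlock, hw]

theorem lift_toBlock [Monoid M] (h : FreeMonoid α → M) {d : ℕ} {w : FreeMonoid α}
    (hw : w.length = d) : lift (h ∘ Subtype.val) (toBlock d w) = h w := by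
  simp [toBlock, hw]

end FreeMonoid

namespace MonoidAlgebra

open FreeMonoid

variable {R α M ι : Type*} [Semiring R]

theorem length_of_mem_support_list_prod {d : ℕ} (l : List R[FreeMonoid α])
    (hl : ∀ p ∈ l, ∀ w ∈ p.coeff.support, w.length = d) :
    ∀ w ∈ l.prod.coeff.support, w.length = l.length * d := by
  classical
  induction l with
  | nil =>
    intro w hw
    rw [List.prod_nil, one_def, coeff_single, Finsupp.mem_support_single] at hw
    simp [hw.1]
  | cons p l ih =>
    intro w hw
    obtain ⟨a, ha, b, hb, rfl⟩ := Finset.mem_mul.1 (support_coeff_mul_subset p l.prod hw)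
    rw [length_mul, hl p List.mem_cons_self a ha,
      ih (fun q hq => hl q (List.mem_cons_of_mem _ hq)) b hb, List.length_cons]
    ring

theorem mapDomain_id (x : R[α]) : mapDomain id x = x := by
  ext
  simp

theorem eq_zero_of_mapDomain_eq_zero {β : Type*} {f : α → β} {S : Set α} (hf : Set.InjOn f S)
    {x : R[α]} (hx : ↑x.coeff.support ⊆ S) (h : mapDomain f x = 0) : x = 0 := by
  apply coeff_injective
  refine Finsupp.mapDomain_injOn S hf hx (by simp) ?_
  simpa [← coeff_mapDomain] using congrArg coeff h

variable {d : ℕ} {p : R[FreeMonoid α]}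

theorem length_of_mem_support_mapDomain_toBlock (hp : ∀ w ∈ p.coeff.support, w.length = d) :
    ∀ u ∈ (mapDomain (toBlock d) p).coeff.support, u.length = 1 := by
  classical
  intro u hu
  rw [coeff_mapDomain] at hu
  obtain ⟨w, hw, rfl⟩ := Finset.mem_image.1 (Finsupp.mapDomain_support hu)
  exact length_toBlock (hp w hw)

theorem mapDomain_lift_mapDomain_toBlock [Monoid M] (h : FreeMonoid α → M)
    (hp : ∀ w ∈ p.coeff.support, w.length = d) :
    mapDomain (FreeMonoid.lift (h ∘ Subtype.val)) (mapDomain (toBlock d) p) = mapDomain h p := by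
  apply coeff_injective
  simp only [coeff_mapDomain, ← Finsupp.mapDomain_comp]
  exact Finsupp.mapDomain_congr fun w hw => lift_toBlock h (hp w hw)

theorem sum_prod_mapDomain_eq [Fintype ι] [Monoid M] {m : ℕ} (h : FreeMonoid α → M)
    (Q : ι → Fin m → R[FreeMonoid α])
    (hQ : ∀ i j, ∀ w ∈ (Q i j).coeff.support, w.length = d) :
    ∑ i, (List.ofFn fun j => mapDomain h (Q i j)).prod =
      mapDomain (FreeMonoid.lift (h ∘ Subtype.val))
        (∑ i, (List.ofFn fun j => mapDomain (toBlock d) (Q i j)).prod) := by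
  rw [← mapDomainRingHom_apply, map_sum]
  refine Finset.sum_congr rfl fun i _ => ?_
  rw [map_list_prod, List.map_ofFn]
  congr 2 with j : 1
  exact (mapDomain_lift_mapDomain_toBlock h (hQ i j)).symm

theorem length_of_mem_support_sum_prod_mapDomain_toBlock [Fintype ι] {m : ℕ}
    (Q : ι → Fin m → R[FreeMonoid α])
    (hQ : ∀ i j, ∀ w ∈ (Q i j).coeff.support, w.length = d) :
    ∀ u ∈ (∑ i, (List.ofFn fun j => mapDomain (toBlock d) (Q i j)).prod).coeff.support,
      u.length = m := by
  intro u hu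
  rw [coeff_sum] at hu
  obtain ⟨i, -, hi⟩ := Finsupp.mem_support_finsetSum u hu
  have := length_of_mem_support_list_prod _ (fun p hp => by
    obtain ⟨j, rfl⟩ := List.mem_ofFn.1 hp
    exact length_of_mem_support_mapDomain_toBlock (hQ i j)) u hi
  rwa [List.length_ofFn, mul_one] at this

end MonoidAlgebra

open MonoidAlgebra FreeMonoid in
theorem stmt18_general {F : Type*} [Field F] {n n' s D₂ D₁ D' : ℕ}
    (σ : FreeMonoid (Fin n) → FreeMonoid (Fin n'))
    (hσinj : Function.Injective σ)
    (hσlen : ∀ w : FreeMonoid (Fin n), (FreeMonoid.toList w).length = D₁ →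
      (FreeMonoid.toList (σ w)).length = D')
    (Q : Fin s → Fin D₂ → MonoidAlgebra F (FreeMonoid (Fin n)))
    (hQhom : ∀ i j, ∀ w ∈ (Q i j).coeff.support, (FreeMonoid.toList w).length = D₁)
    (Qhat : Fin s → Fin D₂ → MonoidAlgebra F (FreeMonoid (Fin n')))
    (hQhat : ∀ i j, Qhat i j = MonoidAlgebra.mapDomain σ (Q i j))
    (hne : (∑ i, (List.ofFn fun j => Q i j).prod) ≠ 0) :
    (∑ i, (List.ofFn fun j => Qhat i j).prod) ≠ 0 := by
  set P := ∑ i, (List.ofFn fun j => mapDomain (toBlock D₁) (Q i j)).prod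
  have hf : ∑ i, (List.ofFn fun j => Q i j).prod = mapDomain (lift Subtype.val) P := by
    simpa only [mapDomain_id, Function.id_comp] using sum_prod_mapDomain_eq id Q hQhom
  have hfhat :
      ∑ i, (List.ofFn fun j => Qhat i j).prod = mapDomain (lift (σ ∘ Subtype.val)) P := by
    simpa only [hQhat] using sum_prod_mapDomain_eq σ Q hQhom
  have hP : (P.coeff.support : Set (FreeMonoid (Block (Fin n) D₁))) ⊆ {u | u.length = D₂} :=
    length_of_mem_support_sum_prod_mapDomain_toBlock Q hQhom
  have hinj : Set.InjOn (lift (σ ∘ Subtype.val))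
      {u : FreeMonoid (Block (Fin n) D₁) | u.length = D₂} :=
    lift_injOn_length (hσinj.comp Subtype.val_injective) (fun w => hσlen w.1 w.2) D₂
  rw [hfhat]
  intro hP0
  rw [eq_zero_of_mapDomain_eq_zero hinj hP hP0, MonoidAlgebra.mapDomain_zero] at hf
  exact hne hf

/-- Abstract form of the structure-transformation lemma: if
`f = Σ_{i∈[s]} ∏_{j∈[D₂]} Q_{ij} ≠ 0` with each `Q_{ij}` homogeneous of degree
`D₁`, and `τ = mapDomain σ` is the `F`-linear substitution induced by an
injective map `σ` on monomials sending degree-`D₁` words to words of a fixed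
length `D'` (so each `Q_{ij}` is replaced by `Q̂_{ij} = τ(Q_{ij})` over new
variables, `Q_{ij} ≠ 0` implies `Q̂_{ij} ≠ 0`, and linear relations
`Σ_i c_i Q_{i,j} = 0` hold iff `Σ_i c_i Q̂_{i,j} = 0`), then
`f̂ = Σ_i ∏_j Q̂_{ij} ≠ 0`. -/
theorem stmt18 {F : Type*} [Field F] {n n' s D₂ D₁ D' : ℕ}
    (σ : FreeMonoid (Fin n) → FreeMonoid (Fin n'))
    (hσinj : Function.Injective σ)
    (hσlen : ∀ w : FreeMonoid (Fin n), (FreeMonoid.toList w).length = D₁ →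
      (FreeMonoid.toList (σ w)).length = D')
    (Q : Fin s → Fin D₂ → MonoidAlgebra F (FreeMonoid (Fin n)))
    (hQhom : ∀ i j, ∀ w ∈ (Q i j).coeff.support, (FreeMonoid.toList w).length = D₁)
    (Qhat : Fin s → Fin D₂ → MonoidAlgebra F (FreeMonoid (Fin n')))
    (hQhat : ∀ i j, Qhat i j = MonoidAlgebra.mapDomain σ (Q i j))
    (hnz : ∀ i j, Q i j ≠ 0 → Qhat i j ≠ 0)
    (hlin : ∀ (j : Fin D₂) (cv : Fin s → F),
      (∑ i, cv i • Q i j) = 0 ↔ (∑ i, cv i • Qhat i j) = 0)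
    (hne : (∑ i, (List.ofFn fun j => Q i j).prod) ≠ 0) :
    (∑ i, (List.ofFn fun j => Qhat i j).prod) ≠ 0 :=
  stmt18_general σ hσinj hσlen Q hQhom Qhat hQhat hne
end
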